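/- arXiv:2603.11802 — 3 statements merged into one kernel-verified Lean document; each statement's English description precedes it below -/
import Mathlib

section
/- SDec-POMDP and Dec-POMDP model-policy-objective structures are equivalent: under the construction in which the blackboard memory remains M_c = ∅, each local memory update enforces m_i' = m_i·a_i^sel·o_i^sel with a_i^sel = a_i and o_i^sel = o_i, the sojourn-time distribution collapses (all terms independent of dτ), and ψ(ā | m_c, m̄, s) = 1 exactly when ā = π̄(h̄), the semi-decentralized value satisfies, for every joint history h̄ and initial belief b⁰, V^{π_c,π̄}(m_c, m̄, s) = V^{π̄}(s, h̄), where V^{π̄} obeys the decentralized value recursion V^{π̄}(s,h̄) = R(s,π̄(h̄)) + γ Σ_{s'∈S} Σ_{ō'∈Ō} Pr(s',ō' | s,π̄(h̄)) V^{π̄}(s',h̄') with Pr(s',ō'|s,ā) = T(s'|s,ā)·O(ō'|s',ā). -/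
/-!
Statement 6: SDec-POMDP and Dec-POMDP model-policy-objective structures are
equivalent: under the fully-decentralized construction, the semi-decentralized
value function equals the decentralized value function on every joint history
and every initial belief.
-/

open scoped NNReal

/-- A decentralized POMDP. -/
structure DecPOMDP (I S : Type) (A O : I → Type) where
  T : S → (∀ i, A i) → PMF S
  Obs : S → (∀ i, A i) → PMF (∀ i, O i)
  R : S → (∀ i, A i) → ℝ

/-- Blackboard memory `M_c = (∏ i, ({∅} ∪ A_i O_i))*`. -/
abbrev McT (I : Type) (A O : I → Type) := List (∀ i, Option (A i × O i))

/-- Local action–observation string `(A_i O_i)*` of agent `i`. -/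
abbrev LocT (I : Type) (A O : I → Type) (i : I) := List (A i × O i)

section

variable {I S : Type} {A O : I → Type}
variable [Fintype I] [DecidableEq I] [Fintype S]
  [∀ i, Fintype (A i)] [∀ i, Fintype (O i)]

/-- The decentralized value recursion
`V^π̄(s,h̄) = R(s,π̄(h̄)) + γ Σ_{s'} Σ_{ō'} Pr(s',ō' ∣ s,π̄(h̄)) V^π̄(s',h̄')`
with `Pr(s',ō'∣s,ā) = T(s'∣s,ā)·O(ō'∣s',ā)`, where the joint history is the
tuple of local action–observation histories (horizon-indexed). -/
noncomputable def decValue (M : DecPOMDP I S A O) (γ : ℝ)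
    (π : ∀ i, LocT I A O i → A i) : ℕ → S → (∀ i, LocT I A O i) → ℝ
  | 0, _, _ => 0
  | n + 1, s, h =>
      M.R s (fun i => π i (h i)) +
        γ * ∑ s' : S, ∑ o' : (∀ i, O i),
          (M.T s (fun i => π i (h i)) s').toReal *
            (M.Obs s' (fun i => π i (h i)) o').toReal *
              decValue M γ π n s' (fun i => h i ++ [(π i (h i), o' i)])

/-- The semi-decentralized value recursion (horizon-indexed). -/
noncomputable def sdecValue (M : DecPOMDP I S A O) (γ : ℝ)
    (F : S → (∀ i, A i) → PMF (I → ℝ≥0))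
    (ψ : McT I A O → (∀ i, LocT I A O i) → PMF (∀ i, A i))
    (ηc : McT I A O → (∀ i, A i) → (∀ i, O i) → PMF (McT I A O))
    (ηa : ∀ i, LocT I A O i → (∀ i, A i) → (∀ i, O i) → PMF (LocT I A O i)) :
    ℕ → McT I A O → (∀ i, LocT I A O i) → S → ℝ
  | 0, _, _, _ => 0
  | n + 1, mc, m, s =>
      ∑ a : (∀ i, A i), (ψ mc m a).toReal *
        (M.R s a +
          γ * ∑' τ : (I → ℝ≥0), (F s a τ).toReal *
            ∑ s' : S, ∑ o' : (∀ i, O i),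
              (M.T s a s').toReal * (M.Obs s' a o').toReal *
                ∑' mc' : McT I A O, (ηc mc a o' mc').toReal *
                  ∑' m' : (∀ i, LocT I A O i),
                    (∏ i, (ηa i (m i) a o' (m' i)).toReal) *
                      sdecValue M γ F ψ ηc ηa n mc' m' s')


private lemma tsum_pure_mul' {α : Type*} (c : α) (g : α → ℝ) :
    ∑' x, ((PMF.pure c : PMF α) x).toReal * g x = g c := by
  classical
  rw [tsum_eq_single c]
  · simp
  · intro b hb; simp [PMF.pure_apply, hb]

private lemma tsum_pi_pure_mul' {I : Type} [Fintype I] {β : I → Type}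
    (c : ∀ i, β i) (g : (∀ i, β i) → ℝ) :
    ∑' m', (∏ i, ((PMF.pure (c i) : PMF (β i)) (m' i)).toReal) * g m' = g c := by
  classical
  rw [tsum_eq_single c]
  · simp
  · intro b hb
    obtain ⟨i, hi⟩ := Function.ne_iff.mp hb
    have h0 : ((PMF.pure (c i) : PMF (β i)) (b i)).toReal = 0 := by
      simp [PMF.pure_apply, hi]
    rw [Finset.prod_eq_zero (Finset.mem_univ i) h0, zero_mul]

private lemma tsum_pmf_toReal' {α : Type*} (p : PMF α) : ∑' x, (p x).toReal = 1 := by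
  rw [← ENNReal.tsum_toReal_eq (fun a => p.apply_ne_top a), p.tsum_coe, ENNReal.toReal_one]

private lemma sum_pure_mul' {α : Type*} [Fintype α] (c : α) (f : α → ℝ) :
    ∑ a : α, ((PMF.pure c : PMF α) a).toReal * f a = f c := by
  classical
  rw [Finset.sum_eq_single c]
  · simp
  · intro b _ hb; simp [PMF.pure_apply, hb]
  · simp

/-- Under the construction in which the blackboard memory
remains `M_c = ∅`, each local memory update enforces `m_i' = m_i·a_i·o_i`, the
sojourn-time distribution collapses (all terms independent of `dτ̄`), and
`ψ(ā ∣ m_c,m̄,s) = 1` exactly when `ā = π̄(h̄)` (with `m̄ = h̄`), the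
semi-decentralized value equals the decentralized value `V^π̄(s,h̄)` for every
joint history `h̄` and every initial belief `b⁰`. -/
theorem sdecpomdp_decpomdp_value_equivalence
    (M : DecPOMDP I S A O) (γ : ℝ) (π : ∀ i, LocT I A O i → A i)
    (F : S → (∀ i, A i) → PMF (I → ℝ≥0))
    (ψ : McT I A O → (∀ i, LocT I A O i) → PMF (∀ i, A i))
    (ηc : McT I A O → (∀ i, A i) → (∀ i, O i) → PMF (McT I A O))
    (ηa : ∀ i, LocT I A O i → (∀ i, A i) → (∀ i, O i) → PMF (LocT I A O i))
    (hψ : ∀ mc m, ψ mc m = PMF.pure fun i => π i (m i))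
    (hηc : ∀ mc a o, ηc mc a o = PMF.pure mc)
    (hηa : ∀ i mi a o, ηa i mi a o = PMF.pure (mi ++ [(a i, o i)])) :
    (∀ (n : ℕ) (m : ∀ i, LocT I A O i) (s : S),
        sdecValue M γ F ψ ηc ηa n [] m s = decValue M γ π n s m) ∧
    (∀ (n : ℕ) (m : ∀ i, LocT I A O i) (b0 : S → ℝ),
        ∑ s : S, b0 s * sdecValue M γ F ψ ηc ηa n [] m s =
          ∑ s : S, b0 s * decValue M γ π n s m) := by
  have main : ∀ (n : ℕ) (m : ∀ i, LocT I A O i) (s : S),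
      sdecValue M γ F ψ ηc ηa n [] m s = decValue M γ π n s m := by
    intro n
    induction n with
    | zero => intro m s; simp [sdecValue, decValue]
    | succ n ih =>
      intro m s
      simp only [sdecValue, decValue, hψ, hηc, hηa]
      simp_rw [tsum_pure_mul', tsum_pi_pure_mul', ih, tsum_mul_right,
        tsum_pmf_toReal', one_mul, sum_pure_mul']
  refine ⟨main, fun n m b0 => ?_⟩
  simp_rw [main]

end
end

section
/- SDec-POMDP and Dec-POMDP-Com model-policy-objective structures are equivalent: for every joint history h̄ and initial belief b⁰, the value of the Dec-POMDP-Com policy structure equals the value of the corresponding SDec-POMDP policy structure, V_{XY Dec-POMDP-Com}(h̄, b⁰) = V_{XY SDec-POMDP}(h̄, b⁰), as obtained by composing the value-preserving reduction between the Dec-POMDP-Com and the Dec-POMDP with the value equality V_{XY Dec-POMDP}(h̄, b⁰) = V_{XY SDec-POMDP}(h̄, b⁰) between the Dec-POMDP and the SDec-POMDP. -/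
/-!
Statement 14: SDec-POMDP and Dec-POMDP-Com model-policy-objective structures
are equivalent: the value of a Dec-POMDP-Com policy structure equals the value
of the corresponding SDec-POMDP policy structure, obtained by composing the
value-preserving reduction between the Dec-POMDP-Com and the Dec-POMDP with
the value equality between the Dec-POMDP and the SDec-POMDP.
-/

open scoped NNReal

/-- A Dec-POMDP-Com: a Dec-POMDP extended with an alphabet `Msg` of messages
and a communication cost function. -/
structure DecPOMDPCom (I S : Type) (A O : I → Type) (Msg : Type) extends
    DecPOMDP I S A O where
  cost : (I → Msg) → ℝ

/-- Local history of agent `i` in the Dec-POMDP obtained from a Dec-POMDP-Com: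
actions are control–message pairs, observations carry broadcast messages. -/
abbrev ComHist (I : Type) (A O : I → Type) (Msg : Type) (i : I) :=
  List ((A i × Msg) × (O i × (I → Msg)))

section

variable {I S : Type} {A O : I → Type}
variable [Fintype I] [DecidableEq I] [Fintype S]
  [∀ i, Fintype (A i)] [∀ i, Fintype (O i)]

variable {Msg : Type} [Fintype Msg]

/-- The value recursion of a Dec-POMDP-Com under a pair of control and
communication policies: rewards are control rewards minus communication
costs, and under instantaneous noise-free broadcast every agent additionally
observes the messages of all agents (horizon-indexed). -/
noncomputable def comValue (C : DecPOMDPCom I S A O Msg) (γ : ℝ)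
    (πa : ∀ i, ComHist I A O Msg i → A i)
    (πσ : ∀ i, ComHist I A O Msg i → Msg) :
    ℕ → S → (∀ i, ComHist I A O Msg i) → ℝ
  | 0, _, _ => 0
  | n + 1, s, h =>
      (C.R s (fun i => πa i (h i)) - C.cost fun i => πσ i (h i)) +
        γ * ∑ s' : S, ∑ o' : (∀ i, O i),
          (C.T s (fun i => πa i (h i)) s').toReal *
            (C.Obs s' (fun i => πa i (h i)) o').toReal *
              comValue C γ πa πσ n s'
                (fun i => h i ++
                  [((πa i (h i), πσ i (h i)), (o' i, fun j => πσ j (h j)))])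

end

/-!
Treating a message as a second component of the action and the broadcast joint message as a
second component of every observation turns the Dec-POMDP-Com into a Dec-POMDP whose value
recursion is that of the Dec-POMDP-Com: the pushforward of the observation kernel only relabels
the observation sum. On the SDec-POMDP side, with the blackboard policy equal to the local one
and deterministic memory updates, every expectation in the recursion is against a Dirac mass and
collapses to a single term, except the one over sojourn times, whose integrand does not depend on
the sojourn time and which therefore just sums a probability mass function to one.
-/

namespace PMF

theorem tsum_pure_toReal_mul {α : Type*} (a : α) (f : α → ℝ) :
    ∑' x, (pure a x).toReal * f x = f a := by
  rw [tsum_eq_single a fun x hx => by rw [pure_apply_of_ne a x hx, ENNReal.toReal_zero, zero_mul],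
    pure_apply_self, ENNReal.toReal_one, one_mul]

theorem sum_pure_toReal_mul {α : Type*} [Fintype α] (a : α) (f : α → ℝ) :
    ∑ x, (pure a x).toReal * f x = f a := by
  rw [← tsum_fintype (L := .unconditional _), tsum_pure_toReal_mul]

theorem tsum_toReal_mul_const {α : Type*} (p : PMF α) (c : ℝ) :
    ∑' x, (p x).toReal * c = c := by
  rw [tsum_mul_right, ← ENNReal.tsum_toReal_eq p.apply_ne_top, p.tsum_coe, ENNReal.toReal_one,
    one_mul]

theorem prod_pure_apply_toReal {ι : Type*} [Fintype ι] {β : ι → Type*} (x y : ∀ i, β i) :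
    ∏ i, (pure (x i) (y i)).toReal = (pure x y).toReal := by
  by_cases hxy : y = x
  · simp [hxy]
  · obtain ⟨i, hi⟩ := Function.ne_iff.mp hxy
    rw [Finset.prod_eq_zero (Finset.mem_univ i) (by rw [pure_apply_of_ne _ _ hi]; rfl),
      pure_apply_of_ne _ _ hxy, ENNReal.toReal_zero]

theorem sum_map_toReal_mul {α β : Type*} [Fintype α] [Fintype β] (p : PMF α) (f : α → β)
    (g : β → ℝ) : ∑ b, (p.map f b).toReal * g b = ∑ a, (p a).toReal * g (f a) := by
  classical
  have hmap (b : β) : (p.map f b).toReal = ∑ a, if b = f a then (p a).toReal else 0 := by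
    rw [map_apply, tsum_fintype,
      ENNReal.toReal_sum fun a _ => by split_ifs <;> simp [p.apply_ne_top]]
    simp_rw [apply_ite ENNReal.toReal, ENNReal.toReal_zero]
  simp_rw [hmap, Finset.sum_mul, ite_mul, zero_mul]
  rw [Finset.sum_comm]
  simp

end PMF

noncomputable def DecPOMDPCom.toBroadcastDecPOMDP {I S : Type} {A O : I → Type} {Msg : Type}
    (C : DecPOMDPCom I S A O Msg) :
    DecPOMDP I S (fun i => A i × Msg) (fun i => O i × (I → Msg)) where
  T s a := C.T s fun i => (a i).1
  Obs s' a := (C.Obs s' fun i => (a i).1).map fun o i => (o i, fun j => (a j).2)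
  R s a := C.R s (fun i => (a i).1) - C.cost fun i => (a i).2

theorem comValue_eq_decValue_toBroadcastDecPOMDP {I S : Type} {A O : I → Type} {Msg : Type}
    [Fintype I] [DecidableEq I] [Fintype S] [∀ i, Fintype (O i)] [Fintype Msg]
    (C : DecPOMDPCom I S A O Msg) (γ : ℝ)
    (πa : ∀ i, ComHist I A O Msg i → A i) (πσ : ∀ i, ComHist I A O Msg i → Msg) (n : ℕ)
    (s : S) (h : ∀ i, ComHist I A O Msg i) :
    comValue C γ πa πσ n s h =
      decValue C.toBroadcastDecPOMDP γ (fun i m => (πa i m, πσ i m)) n s h := by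
  induction n generalizing s h with
  | zero => rfl
  | succ n ih =>
    rw [comValue, decValue]
    simp_rw [mul_assoc, ← Finset.mul_sum]
    simp only [DecPOMDPCom.toBroadcastDecPOMDP, PMF.sum_map_toReal_mul, ih]

section

variable {I S : Type} {A O : I → Type}
variable [Fintype I] [DecidableEq I] [Fintype S]
  [∀ i, Fintype (A i)] [∀ i, Fintype (O i)]

theorem decValue_eq_sdecValue_of_eq_pure (M : DecPOMDP I S A O) (γ : ℝ)
    (π : ∀ i, LocT I A O i → A i) (F : S → (∀ i, A i) → PMF (I → ℝ≥0))
    (ψ : McT I A O → (∀ i, LocT I A O i) → PMF (∀ i, A i))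
    (ηc : McT I A O → (∀ i, A i) → (∀ i, O i) → PMF (McT I A O))
    (ηa : ∀ i, LocT I A O i → (∀ i, A i) → (∀ i, O i) → PMF (LocT I A O i))
    (hψ : ∀ mc m, ψ mc m = PMF.pure fun i => π i (m i))
    (hηc : ∀ mc a o, ηc mc a o = PMF.pure mc)
    (hηa : ∀ i mi a o, ηa i mi a o = PMF.pure (mi ++ [(a i, o i)]))
    (n : ℕ) (mc : McT I A O) (m : ∀ i, LocT I A O i) (s : S) :
    decValue M γ π n s m = sdecValue M γ F ψ ηc ηa n mc m s := by
  induction n generalizing m s with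
  | zero => rfl
  | succ n ih =>
    rw [decValue, sdecValue]
    simp only [hψ, hηc, hηa, PMF.prod_pure_apply_toReal, PMF.tsum_pure_toReal_mul,
      PMF.tsum_toReal_mul_const, PMF.sum_pure_toReal_mul, ih]

variable {Msg : Type} [Fintype Msg]

/-- For every joint history `h̄` and initial belief `b⁰`,
the value of the Dec-POMDP-Com policy structure equals the value of the
corresponding SDec-POMDP policy structure, obtained by composing the
value-preserving reduction between the Dec-POMDP-Com and the (product-action)
Dec-POMDP with the value equality between the Dec-POMDP and the SDec-POMDP. -/
theorem sdecpomdp_decpomdpcom_value_equivalence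
    (C : DecPOMDPCom I S A O Msg) (γ : ℝ)
    (πa : ∀ i, ComHist I A O Msg i → A i)
    (πσ : ∀ i, ComHist I A O Msg i → Msg) :
    ∃ M : DecPOMDP I S (fun i => A i × Msg) (fun i => O i × (I → Msg)),
      -- the value-preserving reduction Dec-POMDP-Com ≤ Dec-POMDP
      (∀ s a, M.T s a = C.T s fun i => (a i).1) ∧
      (∀ s' a, M.Obs s' a =
        (C.Obs s' fun i => (a i).1).map fun o i => (o i, fun j => (a j).2)) ∧
      (∀ s a, M.R s a = C.R s (fun i => (a i).1) - C.cost fun i => (a i).2) ∧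
      -- composed with the value equality Dec-POMDP = SDec-POMDP
      (∀ (F : S → (∀ i, (fun i => A i × Msg) i) → PMF (I → ℝ≥0))
          (ψ : McT I (fun i => A i × Msg) (fun i => O i × (I → Msg)) →
            (∀ i, LocT I (fun i => A i × Msg) (fun i => O i × (I → Msg)) i) →
              PMF (∀ i, A i × Msg))
          (ηc : McT I (fun i => A i × Msg) (fun i => O i × (I → Msg)) →
            (∀ i, A i × Msg) → (∀ i, O i × (I → Msg)) →
              PMF (McT I (fun i => A i × Msg) (fun i => O i × (I → Msg))))
          (ηa : ∀ i, LocT I (fun i => A i × Msg) (fun i => O i × (I → Msg)) i →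
            (∀ i, A i × Msg) → (∀ i, O i × (I → Msg)) →
              PMF (LocT I (fun i => A i × Msg) (fun i => O i × (I → Msg)) i)),
        (∀ mc m, ψ mc m =
          PMF.pure fun i => (πa i (m i), πσ i (m i))) →
        (∀ mc a o, ηc mc a o = PMF.pure mc) →
        (∀ i mi a o, ηa i mi a o = PMF.pure (mi ++ [(a i, o i)])) →
        ∀ (n : ℕ) (h : ∀ i, ComHist I A O Msg i) (b0 : S → ℝ),
          (∀ s : S, comValue C γ πa πσ n s h =
            decValue M γ (fun i m => (πa i m, πσ i m)) n s h) ∧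
          (∀ s : S, decValue M γ (fun i m => (πa i m, πσ i m)) n s h =
            sdecValue M γ F ψ ηc ηa n [] h s) ∧
          ∑ s : S, b0 s * comValue C γ πa πσ n s h =
            ∑ s : S, b0 s * sdecValue M γ F ψ ηc ηa n [] h s) := by
  refine ⟨C.toBroadcastDecPOMDP, fun _ _ => rfl, fun _ _ => rfl, fun _ _ => rfl, ?_⟩
  intro F ψ ηc ηa hψ hηc hηa n h b0
  have hcom (s : S) := comValue_eq_decValue_toBroadcastDecPOMDP C γ πa πσ n s h
  have hsdec (s : S) := decValue_eq_sdecValue_of_eq_pure C.toBroadcastDecPOMDP γ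
    (fun i m => (πa i m, πσ i m)) F ψ ηc ηa hψ hηc hηa n [] h s
  exact ⟨hcom, hsdec, Finset.sum_congr rfl fun s _ => by rw [hcom, hsdec]⟩
end
end

section
/- The SDec-POMDP and the Dec-POMDP-Com are equivalent: their models reduce to one another, their model-policy structures reduce to one another, and for every joint history h̄ and initial belief b⁰ the corresponding value functions agree, V_{SDec-POMDP}(h̄, b⁰) = V_{Dec-POMDP-Com}(h̄, b⁰). -/
/-!
A Dec-POMDP-Com is a Dec-POMDP in which agent `i` acts in `A_i × Σ` and observes
`O_i × Σ^I`: the broadcast messages are folded into every observation and the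
communication cost into the reward, and the value recursion of the Dec-POMDP-Com is
literally the Dec-POMDP value recursion of this folded model. An SDec-POMDP run with
a deterministic blackboard policy, an unchanged blackboard and memories that append
their own action–observation pair collapses to the same Dec-POMDP recursion, because
the sojourn times then enter the value only through `∑ τ, F τ = 1`.

The model reductions are explicit: a Dec-POMDP is an SDec-POMDP that never
communicates and a Dec-POMDP-Com with a single free message, and an SDec-POMDP is a
Dec-POMDP over the states `S × ℝ≥0^I` with an extra blackboard agent.
-/

open scoped NNReal

/-- A semi-decentralized POMDP with sojourn-time kernel `F` and selector
functions routing memories, actions, and observations. -/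
structure SDecPOMDP (I S : Type) (A O : I → Type) where
  F : S → (∀ i, A i) → (I → ℝ≥0) → PMF (I → ℝ≥0)
  T : S → (∀ i, A i) → (I → ℝ≥0) → PMF S
  Obs : S → (∀ i, A i) → (I → ℝ≥0) → PMF (∀ i, O i)
  R : S → (∀ i, A i) → ℝ
  fSel : (I → ℝ≥0) → I → List (∀ j, Option (A j × O j)) →
    Option (List (∀ j, Option (A j × O j)))
  fSelC : (I → ℝ≥0) → (∀ j, List (A j × O j)) → (∀ j, Option (List (A j × O j)))
  gSel : (I → ℝ≥0) → I → (∀ j, A j) → (∀ j, Option (A j))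
  gSelC : (I → ℝ≥0) → (∀ j, A j) → (∀ j, Option (A j))
  hSel : (I → ℝ≥0) → I → (∀ j, O j) → (∀ j, Option (O j))
  hSelC : (I → ℝ≥0) → (∀ j, O j) → (∀ j, Option (O j))

/-- Actions of the agent set augmented with a blackboard agent. -/
def extA (I : Type) (A : I → Type) : Option I → Type
  | none => Unit
  | some i => A i

/-- Observations of the augmented agent set. -/
def extO (I : Type) (A O : I → Type) : Option I → Type
  | none => ∀ i, List (A i × O i)
  | some i => O i

namespace PMF

variable {α β : Type*}

theorem tsum_toReal_eq_one (p : PMF α) : ∑' a, (p a).toReal = 1 := by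
  rw [← ENNReal.tsum_toReal_eq p.apply_ne_top, p.tsum_coe, ENNReal.toReal_one]

theorem tsum_toReal_pure_mul (x : α) (g : α → ℝ) :
    ∑' a, (pure x a).toReal * g a = g x := by
  rw [tsum_eq_single x]
  · simp
  · intro a ha
    simp [pure_apply_of_ne _ _ ha]

theorem sum_toReal_pure_mul [Fintype α] (x : α) (g : α → ℝ) :
    ∑ a, (pure x a).toReal * g a = g x := by
  rw [← tsum_fintype (L := .unconditional α), tsum_toReal_pure_mul]

theorem tsum_prod_toReal_pure_mul {ι : Type*} [Fintype ι] {κ : ι → Type*}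
    (x : ∀ i, κ i) (g : (∀ i, κ i) → ℝ) :
    ∑' y : ∀ i, κ i, (∏ i, (pure (x i) (y i)).toReal) * g y = g x := by
  rw [tsum_eq_single x]
  · simp
  · intro y hy
    obtain ⟨i, hi⟩ := Function.ne_iff.mp hy
    rw [Finset.prod_eq_zero (Finset.mem_univ i) (by simp [pure_apply_of_ne _ _ hi]),
      zero_mul]

theorem sum_toReal_map_mul [Fintype α] [Fintype β] (p : PMF α)
    (f : α → β) (g : β → ℝ) :
    ∑ b, (map f p b).toReal * g b = ∑ a, (p a).toReal * g (f a) := by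
  classical
  have map_toReal : ∀ b, (map f p b).toReal = ∑ a, if b = f a then (p a).toReal else 0 := by
    intro b
    rw [map_apply, tsum_fintype, ENNReal.toReal_sum fun a _ => by
      split_ifs <;> simp [p.apply_ne_top]]
    exact Finset.sum_congr rfl fun a _ => by split_ifs <;> simp
  simp only [map_toReal, Finset.sum_mul, ite_mul, zero_mul]
  rw [Finset.sum_comm]
  simp

end PMF

section Reductions

variable {I S : Type} {A O : I → Type}

def selectOwn [DecidableEq I] {β : I → Type} (i : I) (x : ∀ j, β j) : ∀ j, Option (β j) :=
  fun j => if j = i then some (x j) else none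

theorem selectOwn_self [DecidableEq I] {β : I → Type} (i : I) (x : ∀ j, β j) :
    selectOwn i x i = some (x i) :=
  if_pos rfl

theorem selectOwn_of_ne [DecidableEq I] {β : I → Type} {i j : I} (x : ∀ j, β j)
    (h : j ≠ i) :
    selectOwn i x j = none :=
  if_neg h

noncomputable def DecPOMDPCom.foldMessages {Msg : Type} (C : DecPOMDPCom I S A O Msg) :
    DecPOMDP I S (fun i => A i × Msg) (fun i => O i × (I → Msg)) where
  T s a := C.T s fun i => (a i).1
  Obs s' a := (C.Obs s' fun i => (a i).1).map fun o i => (o i, fun j => (a j).2)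
  R s a := C.R s (fun i => (a i).1) - C.cost fun i => (a i).2

def DecPOMDP.toDecPOMDPCom (M : DecPOMDP I S A O) : DecPOMDPCom I S A O Unit :=
  { M with cost := fun _ => 0 }

/-- All sojourn times are positive, so no agent ever writes to the blackboard. -/
noncomputable def DecPOMDP.toSDecPOMDP [DecidableEq I] (M : DecPOMDP I S A O) :
    SDecPOMDP I S A O where
  F _ _ _ := PMF.pure fun _ => 1
  T s a _ := M.T s a
  Obs s' a _ := M.Obs s' a
  R := M.R
  fSel _ _ _ := none
  fSelC _ _ _ := none
  gSel _ := selectOwn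
  gSelC _ _ _ := none
  hSel _ := selectOwn
  hSelC _ _ _ := none

def extendObs (o : ∀ i, O i) : ∀ j, extO I A O j
  | none => fun _ => []
  | some i => o i

/-- The sojourn-time vector becomes part of the state, drawn after the next state. -/
noncomputable def SDecPOMDP.toDecPOMDP (D : SDecPOMDP I S A O) :
    DecPOMDP (Option I) (S × (I → ℝ≥0)) (extA I A) (extO I A O) where
  T p a := (D.T p.1 (fun i => a (some i)) p.2).bind fun s' =>
    (D.F s' (fun i => a (some i)) p.2).map fun τ' => (s', τ')
  Obs p a := (D.Obs p.1 (fun i => a (some i)) p.2).map extendObs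
  R p a := D.R p.1 fun i => a (some i)

theorem SDecPOMDP.toDecPOMDP_T_apply (D : SDecPOMDP I S A O) (s : S) (τ : I → ℝ≥0)
    (a : ∀ j, extA I A j) (s' : S) (τ' : I → ℝ≥0) :
    D.toDecPOMDP.T (s, τ) a (s', τ') =
      D.F s' (fun i => a (some i)) τ τ' * D.T s (fun i => a (some i)) τ s' := by
  have pair_ne {x y : S} {σ σ' : I → ℝ≥0} (h : x ≠ y ∨ σ ≠ σ') :
      (y, σ') ≠ (x, σ) := fun e => by simp_all
  simp only [toDecPOMDP, PMF.bind_apply, PMF.map_apply]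
  rw [tsum_eq_single s', tsum_eq_single τ', if_pos rfl, mul_comm]
  · exact fun σ hσ => if_neg (pair_ne (.inr hσ))
  · intro x hx
    simp [pair_ne (.inl hx)]

theorem SDecPOMDP.toDecPOMDP_Obs_map (D : SDecPOMDP I S A O) (s' : S) (τ' : I → ℝ≥0)
    (a : ∀ j, extA I A j) :
    (D.toDecPOMDP.Obs (s', τ') a).map (fun o i => o (some i)) =
      D.Obs s' (fun i => a (some i)) τ' := by
  rw [toDecPOMDP, PMF.map_comp]
  exact PMF.map_id _

noncomputable def sojournPolicy (πc : McT I A O → ∀ i, A i) (πi : ∀ i, LocT I A O i → A i)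
    (i : I) (m : LocT I A O i × McT I A O × ℝ≥0) : A i :=
  if m.2.2 = 0 then πc m.2.1 i else πi i m.1

theorem sojournPolicy_spec (πc : McT I A O → ∀ i, A i) (πi : ∀ i, LocT I A O i → A i)
    (i : I) (loc : LocT I A O i) (mc : McT I A O) (τ : ℝ≥0) :
    (τ = 0 → sojournPolicy πc πi i (loc, mc, τ) = πc mc i) ∧
      (0 < τ → sojournPolicy πc πi i (loc, mc, τ) = πi i loc) :=
  ⟨fun h => if_pos h, fun h => if_neg h.ne'⟩

end Reductions

section Values

variable {I S : Type} {A O : I → Type} [Fintype I] [DecidableEq I] [Fintype S]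
  [∀ i, Fintype (O i)]

theorem sdecValue_eq_decValue [∀ i, Fintype (A i)] (M : DecPOMDP I S A O) (γ : ℝ)
    (F : S → (∀ i, A i) → PMF (I → ℝ≥0)) (π : ∀ i, LocT I A O i → A i)
    (ψ : McT I A O → (∀ i, LocT I A O i) → PMF (∀ i, A i))
    (ηc : McT I A O → (∀ i, A i) → (∀ i, O i) → PMF (McT I A O))
    (ηa : ∀ i, LocT I A O i → (∀ i, A i) → (∀ i, O i) → PMF (LocT I A O i))
    (hψ : ∀ mc m, ψ mc m = PMF.pure fun i => π i (m i))
    (hηc : ∀ mc a o, ηc mc a o = PMF.pure mc)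
    (hηa : ∀ i mi a o, ηa i mi a o = PMF.pure (mi ++ [(a i, o i)]))
    (n : ℕ) (mc : McT I A O) (m : ∀ i, LocT I A O i) (s : S) :
    sdecValue M γ F ψ ηc ηa n mc m s = decValue M γ π n s m := by
  induction n generalizing m s with
  | zero => rfl
  | succ n ih =>
    have memory_step : ∀ a s' o',
        ∑' mc', (ηc mc a o' mc').toReal *
          ∑' m', (∏ i, (ηa i (m i) a o' (m' i)).toReal) *
            sdecValue M γ F ψ ηc ηa n mc' m' s' =
        decValue M γ π n s' fun i => m i ++ [(a i, o' i)] := by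
      intro a s' o'
      simp only [hηc, hηa, PMF.tsum_toReal_pure_mul, PMF.tsum_prod_toReal_pure_mul, ih]
    rw [sdecValue, decValue, hψ, PMF.sum_toReal_pure_mul]
    simp only [memory_step, tsum_mul_right, PMF.tsum_toReal_eq_one, one_mul]

variable {Msg : Type} [Fintype Msg]

theorem comValue_eq_decValue_foldMessages (C : DecPOMDPCom I S A O Msg) (γ : ℝ)
    (πa : ∀ i, ComHist I A O Msg i → A i) (πσ : ∀ i, ComHist I A O Msg i → Msg)
    (n : ℕ) (s : S) (h : ∀ i, ComHist I A O Msg i) :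
    comValue C γ πa πσ n s h =
      decValue C.foldMessages γ (fun i (m : ComHist I A O Msg i) => (πa i m, πσ i m))
        n s h := by
  induction n generalizing s h with
  | zero => rfl
  | succ n ih =>
    rw [comValue, decValue]
    congr 2
    refine Finset.sum_congr rfl fun s' _ => ?_
    simp only [mul_assoc, ← Finset.mul_sum, ih, DecPOMDPCom.foldMessages,
      PMF.sum_toReal_map_mul]

end Values

/-- The SDec-POMDP and the Dec-POMDP-Com are equivalent:
(i) their models reduce to one another (via the Dec-POMDP), (ii) their
model-policy structures reduce to one another, and (iii) for every joint
history `h̄` and initial belief `b⁰` the corresponding value functions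
agree. -/
theorem sdecpomdp_decpomdpcom_equivalence :
    -- (i) mutual model reduction
    ((∀ (I S : Type) (A O : I → Type) (Msg : Type) [Fintype I] [Fintype S]
        [∀ i, Fintype (A i)] [∀ i, Fintype (O i)] [Fintype Msg],
      ∀ C : DecPOMDPCom I S A O Msg,
        ∃ M : DecPOMDP I S (fun i => A i × Msg) (fun i => O i × (I → Msg)),
          (∀ s a, M.T s a = C.T s fun i => (a i).1) ∧
          (∀ s' a, M.Obs s' a =
            (C.Obs s' fun i => (a i).1).map fun o i => (o i, fun j => (a j).2)) ∧
          (∀ s a, M.R s a = C.R s (fun i => (a i).1) - C.cost fun i => (a i).2)) ∧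
     (∀ (I S : Type) (A O : I → Type) [Fintype I] [Fintype S]
        [∀ i, Fintype (A i)] [∀ i, Fintype (O i)],
      ∀ M : DecPOMDP I S A O,
        ∃ D : SDecPOMDP I S A O,
          D.R = M.R ∧
          (∀ s a τ, D.T s a τ = M.T s a) ∧
          (∀ s a τ, D.Obs s a τ = M.Obs s a) ∧
          (∀ τ i a, D.gSel τ i a i = some (a i) ∧
            ∀ j, j ≠ i → D.gSel τ i a j = none) ∧
          (∀ τ i o, D.hSel τ i o i = some (o i) ∧
            ∀ j, j ≠ i → D.hSel τ i o j = none) ∧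
          (∀ τ a j, D.gSelC τ a j = none) ∧
          (∀ τ o j, D.hSelC τ o j = none)) ∧
     (∀ (I S : Type) (A O : I → Type) [Fintype I] [Fintype S]
        [∀ i, Fintype (A i)] [∀ i, Fintype (O i)],
      ∀ D : SDecPOMDP I S A O,
        ∃ M : DecPOMDP (Option I) (S × (I → ℝ≥0)) (extA I A) (extO I A O),
          (∀ (s : S) (τ : I → ℝ≥0) (a : ∀ j, extA I A j) (s' : S) (τ' : I → ℝ≥0),
            M.T (s, τ) a (s', τ') =
              D.F s' (fun i => a (some i)) τ τ' *
                D.T s (fun i => a (some i)) τ s') ∧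
          (∀ (s' : S) (τ' : I → ℝ≥0) (a : ∀ j, extA I A j),
            (M.Obs (s', τ') a).map (fun o i => o (some i)) =
              D.Obs s' (fun i => a (some i)) τ') ∧
          (∀ (s : S) (τ : I → ℝ≥0) (a : ∀ j, extA I A j),
            M.R (s, τ) a = D.R s (fun i => a (some i)))) ∧
     (∀ (I S : Type) (A O : I → Type) [Fintype I] [Fintype S]
        [∀ i, Fintype (A i)] [∀ i, Fintype (O i)],
      ∀ M : DecPOMDP I S A O,
        ∃ (Msg : Type) (_ : Fintype Msg) (C : DecPOMDPCom I S A O Msg),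
          C.T = M.T ∧ C.Obs = M.Obs ∧ C.R = M.R ∧ (∀ σ, C.cost σ = 0))) ∧
    -- (ii) mutual model-policy reduction
    ((∀ (I : Type) (A O : I → Type) (Msg : Type)
        (πa : ∀ i, ComHist I A O Msg i → A i)
        (πσ : ∀ i, ComHist I A O Msg i → Msg),
      ∃ π : ∀ i, ComHist I A O Msg i → A i × Msg,
        ∀ i m, π i m = (πa i m, πσ i m)) ∧
     (∀ (I : Type) (A O : I → Type) (πd : ∀ i, LocT I A O i → A i),
      ∃ (fAg : I → McT I A O → Option (McT I A O))
        (fC : (∀ i, LocT I A O i) → (∀ i, Option (LocT I A O i)))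
        (ηa : ∀ i, LocT I A O i → (∀ i, A i) → (∀ i, O i) → PMF (LocT I A O i))
        (ψ : McT I A O → (∀ i, LocT I A O i) → PMF (∀ i, A i)),
        (∀ i mc, fAg i mc = none) ∧
        (∀ m i, fC m i = none) ∧
        (∀ i mi a o, ηa i mi a o = PMF.pure (mi ++ [(a i, o i)])) ∧
        (∀ mc m, ψ mc m = PMF.pure fun i => πd i (m i))) ∧
     (∀ (I : Type) (A O : I → Type)
        (πc : McT I A O → ∀ i, A i) (πi : ∀ i, LocT I A O i → A i),
      ∃ (πD : ∀ i, LocT I A O i × McT I A O × ℝ≥0 → A i)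
        (η : ∀ i, LocT I A O i → A i → O i → PMF (LocT I A O i))
        (ψ : (∀ i, LocT I A O i × McT I A O × ℝ≥0) → PMF (∀ i, A i)),
        (∀ (i : I) (loc : LocT I A O i) (mc : McT I A O) (τ : ℝ≥0),
          (τ = 0 → πD i (loc, mc, τ) = πc mc i) ∧
          (0 < τ → πD i (loc, mc, τ) = πi i loc)) ∧
        (∀ i mi a o, η i mi a o = PMF.pure (mi ++ [(a, o)])) ∧
        (∀ m, ψ m = PMF.pure fun i => πD i (m i))) ∧
     (∀ (I : Type) (A O : I → Type) (Msg : Type)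
        (π : ∀ i, ComHist I A O Msg i → A i × Msg),
      ∃ (πa : ∀ i, ComHist I A O Msg i → A i)
        (πσ : ∀ i, ComHist I A O Msg i → Msg),
        ∀ i m, π i m = (πa i m, πσ i m))) ∧
    -- (iii) all joint-history values agree from the initial belief
    (∀ (I S : Type) (A O : I → Type) (Msg : Type)
        [Fintype I] [DecidableEq I] [Fintype S]
        [∀ i, Fintype (A i)] [∀ i, Fintype (O i)] [Fintype Msg],
      ∀ (C : DecPOMDPCom I S A O Msg) (γ : ℝ)
        (πa : ∀ i, ComHist I A O Msg i → A i)
        (πσ : ∀ i, ComHist I A O Msg i → Msg),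
      ∃ M : DecPOMDP I S (fun i => A i × Msg) (fun i => O i × (I → Msg)),
        (∀ s a, M.T s a = C.T s fun i => (a i).1) ∧
        (∀ s' a, M.Obs s' a =
          (C.Obs s' fun i => (a i).1).map fun o i => (o i, fun j => (a j).2)) ∧
        (∀ s a, M.R s a = C.R s (fun i => (a i).1) - C.cost fun i => (a i).2) ∧
        (∀ (F : S → (∀ i, A i × Msg) → PMF (I → ℝ≥0))
            (ψ : McT I (fun i => A i × Msg) (fun i => O i × (I → Msg)) →
              (∀ i, LocT I (fun i => A i × Msg) (fun i => O i × (I → Msg)) i) →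
                PMF (∀ i, A i × Msg))
            (ηc : McT I (fun i => A i × Msg) (fun i => O i × (I → Msg)) →
              (∀ i, A i × Msg) → (∀ i, O i × (I → Msg)) →
                PMF (McT I (fun i => A i × Msg) (fun i => O i × (I → Msg))))
            (ηa : ∀ i, LocT I (fun i => A i × Msg) (fun i => O i × (I → Msg)) i →
              (∀ i, A i × Msg) → (∀ i, O i × (I → Msg)) →
                PMF (LocT I (fun i => A i × Msg) (fun i => O i × (I → Msg)) i)),
          (∀ mc m, ψ mc m = PMF.pure fun i => (πa i (m i), πσ i (m i))) →
          (∀ mc a o, ηc mc a o = PMF.pure mc) →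
          (∀ i mi a o, ηa i mi a o = PMF.pure (mi ++ [(a i, o i)])) →
          ∀ (n : ℕ) (h : ∀ i, ComHist I A O Msg i) (b0 : S → ℝ),
            (∀ s : S, comValue C γ πa πσ n s h =
              sdecValue M γ F ψ ηc ηa n [] h s) ∧
            ∑ s : S, b0 s * comValue C γ πa πσ n s h =
              ∑ s : S, b0 s * sdecValue M γ F ψ ηc ηa n [] h s)) := by
  refine ⟨⟨?comToDec, ?decToSDec, ?sdecToDec, ?decToCom⟩,
    ⟨?comPolicy, ?decPolicyAsSDec, ?sdecPolicy, ?comPolicySplit⟩, ?values⟩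
  case comToDec =>
    exact fun I S A O Msg _ _ _ _ _ C =>
      ⟨C.foldMessages, fun _ _ => rfl, fun _ _ => rfl, fun _ _ => rfl⟩
  case decToSDec =>
    intro I S A O _ _ _ _ M
    classical
    exact ⟨M.toSDecPOMDP, rfl, fun _ _ _ => rfl, fun _ _ _ => rfl,
      fun _ i a => ⟨selectOwn_self i a, fun _ => selectOwn_of_ne a⟩,
      fun _ i o => ⟨selectOwn_self i o, fun _ => selectOwn_of_ne o⟩,
      fun _ _ _ => rfl, fun _ _ _ => rfl⟩
  case sdecToDec =>
    exact fun I S A O _ _ _ _ D =>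
      ⟨D.toDecPOMDP, D.toDecPOMDP_T_apply, D.toDecPOMDP_Obs_map, fun _ _ _ => rfl⟩
  case decToCom =>
    exact fun I S A O _ _ _ _ M =>
      ⟨Unit, inferInstance, M.toDecPOMDPCom, rfl, rfl, rfl, fun _ => rfl⟩
  case comPolicy =>
    exact fun I A O Msg πa πσ => ⟨fun i m => (πa i m, πσ i m), fun _ _ => rfl⟩
  case decPolicyAsSDec =>
    exact fun I A O πd => ⟨fun _ _ => none, fun _ _ => none,
      fun i mi a o => PMF.pure (mi ++ [(a i, o i)]), fun _ m => PMF.pure fun i => πd i (m i),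
      fun _ _ => rfl, fun _ _ => rfl, fun _ _ _ _ => rfl, fun _ _ => rfl⟩
  case sdecPolicy =>
    exact fun I A O πc πi => ⟨sojournPolicy πc πi, fun _ mi a o => PMF.pure (mi ++ [(a, o)]),
      fun m => PMF.pure fun i => sojournPolicy πc πi i (m i),
      sojournPolicy_spec πc πi, fun _ _ _ _ => rfl, fun _ => rfl⟩
  case comPolicySplit =>
    exact fun I A O Msg π => ⟨fun i m => (π i m).1, fun i m => (π i m).2, fun _ _ => rfl⟩
  case values =>
    intro I S A O Msg _ _ _ _ _ _ C γ πa πσ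
    refine ⟨C.foldMessages, fun _ _ => rfl, fun _ _ => rfl, fun _ _ => rfl, ?_⟩
    intro F ψ ηc ηa hψ hηc hηa n h b0
    have value_eq :
        ∀ s, comValue C γ πa πσ n s h = sdecValue C.foldMessages γ F ψ ηc ηa n [] h s :=
      fun s => (comValue_eq_decValue_foldMessages C γ πa πσ n s h).trans
        (sdecValue_eq_decValue _ γ F _ ψ ηc ηa hψ hηc hηa n [] h s).symm
    exact ⟨value_eq, Finset.sum_congr rfl fun s _ => by rw [value_eq s]⟩
end
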